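/- For all integers m and n ≥ 1, the descendant colored Jones polynomials of the figure-eight knot 4_1, defined in ℚ(q) by DJ_n^{(m)} := ∑_{k=0}^{n−1} c_{n,k}(q) · q^{km}, satisfy the inhomogeneous linear q-difference equation q^{m+1} DJ_n^{(m+1)} + (1 − (q^{n} + q^{−n}) q^{m}) DJ_n^{(m)} + q^{m−1} DJ_n^{(m−1)} = 1. -/
import Mathlib


open Finset

/-- The variable `q` of the field `ℚ(q)` of rational functions. -/
noncomputable def q : RatFunc ℚ := RatFunc.X

/-- The cyclotomic kernel `c_{n,k}(q) := q^{−kn} (q^{n+1};q)_k (q^{n−1};q^{−1})_k`. -/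
noncomputable def c (n : ℤ) (k : ℕ) : RatFunc ℚ :=
  q ^ (-(k : ℤ) * n) * (∏ t ∈ range k, (1 - q ^ (n + 1) * q ^ (t : ℤ))) *
    ∏ t ∈ range k, (1 - q ^ (n - 1) * q ^ (-(t : ℤ)))

/-- The descendant colored Jones polynomials of the figure-eight knot `4₁`, with
Habiro polynomials `H_k = 1`. -/
noncomputable def DJ41 (n : ℤ) (m : ℤ) : RatFunc ℚ :=
  ∑ k ∈ range n.toNat, c n k * q ^ ((k : ℤ) * m)

lemma q_ne_zero : q ≠ 0 := RatFunc.X_ne_zero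

lemma c_zero (n : ℤ) : c n 0 = 1 := by simp [c]

lemma c_succ (n : ℤ) (k : ℕ) :
    c n (k + 1) = c n k *
      (q ^ (-n) * (1 - q ^ (n + 1) * q ^ (k : ℤ)) * (1 - q ^ (n - 1) * q ^ (-(k : ℤ)))) := by
  unfold c
  rw [prod_range_succ, prod_range_succ]
  have h : (-(↑(k + 1) : ℤ)) * n = -(k : ℤ) * n + (-n) := by push_cast; ring
  rw [h, zpow_add₀ q_ne_zero]
  ring

lemma c_top (n : ℤ) (hn : 1 ≤ n) : c n n.toNat = 0 := by
  unfold c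
  have h1 : 1 ≤ n.toNat := by omega
  have hmem : n.toNat - 1 ∈ range n.toNat := by
    simp [Finset.mem_range]; omega
  have hz : (1 : RatFunc ℚ) - q ^ (n - 1) * q ^ (-(↑(n.toNat - 1) : ℤ)) = 0 := by
    have hc : (↑(n.toNat - 1) : ℤ) = n - 1 := by omega
    rw [hc, ← zpow_add₀ q_ne_zero]
    simp
  rw [Finset.prod_eq_zero (f := fun t : ℕ => 1 - q ^ (n - 1) * q ^ (-(t : ℤ))) hmem hz, mul_zero]

lemma term_eq (n m : ℤ) (k : ℕ) :
    q ^ (m + 1) * (c n k * q ^ ((k : ℤ) * (m + 1))) +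
      (1 - (q ^ n + q ^ (-n)) * q ^ m) * (c n k * q ^ ((k : ℤ) * m)) +
      q ^ (m - 1) * (c n k * q ^ ((k : ℤ) * (m - 1))) =
    c n k * q ^ ((k : ℤ) * m) - c n (k + 1) * q ^ ((↑(k + 1) : ℤ) * m) := by
  have hq := q_ne_zero
  rw [c_succ]
  have e1 : q ^ (m + 1) = q ^ m * q := zpow_add_one₀ hq m
  have e2 : q ^ (m - 1) = q ^ m * q⁻¹ := zpow_sub_one₀ hq m
  have e3 : q ^ ((k : ℤ) * (m + 1)) = q ^ ((k : ℤ) * m) * q ^ (k : ℤ) := by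
    rw [mul_add, mul_one, zpow_add₀ hq]
  have e4 : q ^ ((k : ℤ) * (m - 1)) = q ^ ((k : ℤ) * m) * (q ^ (k : ℤ))⁻¹ := by
    rw [mul_sub, mul_one, zpow_sub₀ hq, div_eq_mul_inv]
  have e5 : q ^ ((↑(k + 1) : ℤ) * m) = q ^ ((k : ℤ) * m) * q ^ m := by
    have : (↑(k + 1) : ℤ) * m = (k : ℤ) * m + m := by push_cast; ring
    rw [this, zpow_add₀ hq]
  have e6 : q ^ (n + 1) = q ^ n * q := zpow_add_one₀ hq n
  have e7 : q ^ (n - 1) = q ^ n * q⁻¹ := zpow_sub_one₀ hq n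
  have e8 : q ^ (-n) = (q ^ n)⁻¹ := zpow_neg q n
  have e9 : q ^ (-(k : ℤ)) = (q ^ (k : ℤ))⁻¹ := zpow_neg q (k : ℤ)
  rw [e1, e2, e3, e4, e5, e6, e7, e8, e9]
  have hA : q ^ m ≠ 0 := zpow_ne_zero m hq
  have hB : q ^ n ≠ 0 := zpow_ne_zero n hq
  have hC : q ^ (k : ℤ) ≠ 0 := zpow_ne_zero (k : ℤ) hq
  field_simp
  ring

/-- The inhomogeneous linear `q`-difference equation for the descendants of `4₁`. -/
theorem fig8_descendant_recursion (m n : ℤ) (hn : 1 ≤ n) :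
    q ^ (m + 1) * DJ41 n (m + 1) + (1 - (q ^ n + q ^ (-n)) * q ^ m) * DJ41 n m +
        q ^ (m - 1) * DJ41 n (m - 1) = 1 := by
  unfold DJ41
  rw [Finset.mul_sum, Finset.mul_sum, Finset.mul_sum, ← Finset.sum_add_distrib,
    ← Finset.sum_add_distrib]
  have key : ∑ k ∈ range n.toNat,
      (q ^ (m + 1) * (c n k * q ^ ((k : ℤ) * (m + 1))) +
        (1 - (q ^ n + q ^ (-n)) * q ^ m) * (c n k * q ^ ((k : ℤ) * m)) +
        q ^ (m - 1) * (c n k * q ^ ((k : ℤ) * (m - 1)))) =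
      ∑ k ∈ range n.toNat,
        ((fun j : ℕ => c n j * q ^ ((j : ℤ) * m)) k -
          (fun j : ℕ => c n j * q ^ ((j : ℤ) * m)) (k + 1)) := by
    refine Finset.sum_congr rfl fun k _ => ?_
    simpa using term_eq n m k
  rw [key, Finset.sum_range_sub']
  simp [c_zero, c_top n hn]
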